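/- arXiv:2204.13270 — 5 statements merged into one kernel-verified Lean document; each statement's English description precedes it below -/
import Mathlib

section
/- Let U ⊂ ℝ^N be open, and let f : U → [0,∞) be a C²-smooth nonnegative function. Then for every compact set K contained in U there exists a constant C > 0 such that |df(x)|² ≤ C·f(x) for all x ∈ K. -/
/-!
If `f ≥ 0` and `df` is `M`-Lipschitz near `x`, then along any unit direction `v` Taylor's
estimate gives `0 ≤ f (x - t v) ≤ f x - t df(x) v + M t²` for small `t ≥ 0`. Minimising this
quadratic in `t` (or taking the largest admissible `t` when the minimiser is out of reach) bounds
`(df(x) v)²` by a multiple of `f x`. On a compact `K ⊆ U` the Lipschitz constant and the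
admissible radius are uniform, since `d²f` and `df` are bounded on a compact thickening of `K`.
-/

open Metric Set

lemma sq_le_mul_of_forall_nonneg_quadratic {a b B M r : ℝ} (hM : 0 < M) (hr : 0 < r)
    (hb : 0 ≤ b) (hbB : b ≤ B) (h : ∀ t ∈ Icc 0 r, 0 ≤ a - t * b + M * t ^ 2) :
    b ^ 2 ≤ (4 * M + 2 * B / r) * a := by
  have ha : 0 ≤ a := by simpa using h 0 ⟨le_rfl, hr.le⟩
  have hBa : 0 ≤ 2 * B / r * a := by have := hb.trans hbB; positivity
  rcases le_or_gt (b / (2 * M)) r with hbr | hbr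
  · have hmin := h (b / (2 * M)) ⟨by positivity, hbr⟩
    have : b ^ 2 ≤ 4 * M * a := by
      field_simp at hmin
      nlinarith
    linarith
  · have hend := h r ⟨hr.le, le_rfl⟩
    rw [lt_div_iff₀ (by positivity)] at hbr
    have hrb : r * b ≤ 2 * a := by nlinarith
    have : b ^ 2 ≤ 2 * B / r * a := by
      rw [div_mul_eq_mul_div, le_div_iff₀ hr]
      nlinarith
    nlinarith

section LipschitzFDeriv

variable {E : Type*} [NormedAddCommGroup E] [NormedSpace ℝ E] {x : E} {r M : ℝ}

lemma norm_image_sub_sub_fderiv_le_of_lipschitz_fderiv {F : Type*} [NormedAddCommGroup F]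
    [NormedSpace ℝ F] {f : E → F} {y : E} (hM : 0 ≤ M)
    (hdiff : ∀ z ∈ closedBall x r, DifferentiableAt ℝ f z)
    (hlip : ∀ z ∈ closedBall x r, ‖fderiv ℝ f z - fderiv ℝ f x‖ ≤ M * ‖z - x‖)
    (hy : y ∈ closedBall x r) :
    ‖f y - f x - fderiv ℝ f x (y - x)‖ ≤ M * ‖y - x‖ ^ 2 := by
  have hsub : closedBall x ‖y - x‖ ⊆ closedBall x r :=
    closedBall_subset_closedBall (by simpa [dist_eq_norm] using hy)
  have := (convex_closedBall x ‖y - x‖).norm_image_sub_le_of_norm_fderiv_le'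
    (x := x) (y := y) (C := M * ‖y - x‖) (fun z hz => hdiff z (hsub hz))
    (fun z hz => (hlip z (hsub hz)).trans
      (mul_le_mul_of_nonneg_left (by simpa [dist_eq_norm] using hz) hM))
    (mem_closedBall_self (norm_nonneg _)) (by rw [mem_closedBall, dist_eq_norm])
  rwa [mul_assoc, ← sq] at this

lemma sq_norm_fderiv_le_of_nonneg_on_closedBall {f : E → ℝ} (hr : 0 < r) (hM : 0 < M)
    (hf0 : ∀ y ∈ closedBall x r, 0 ≤ f y)
    (hdiff : ∀ y ∈ closedBall x r, DifferentiableAt ℝ f y)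
    (hlip : ∀ y ∈ closedBall x r, ‖fderiv ℝ f y - fderiv ℝ f x‖ ≤ M * ‖y - x‖) :
    ‖fderiv ℝ f x‖ ^ 2 ≤ (4 * M + 2 * ‖fderiv ℝ f x‖ / r) * f x := by
  set L := fderiv ℝ f x with hL
  have hC : 0 ≤ (4 * M + 2 * ‖L‖ / r) * f x := by
    have := hf0 x (mem_closedBall_self hr.le); positivity
  have hdir : ∀ v, ‖v‖ = 1 → 0 ≤ L v → L v ^ 2 ≤ (4 * M + 2 * ‖L‖ / r) * f x := by
    intro v hv hLv
    have hLvL : L v ≤ ‖L‖ :=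
      (Real.le_norm_self _).trans ((L.le_opNorm v).trans_eq (by rw [hv, mul_one]))
    refine sq_le_mul_of_forall_nonneg_quadratic hM hr hLv hLvL fun t ht => ?_
    have hy : x - t • v ∈ closedBall x r := by
      simpa [dist_eq_norm, norm_smul, hv, abs_of_nonneg ht.1] using ht.2
    have htaylor := norm_image_sub_sub_fderiv_le_of_lipschitz_fderiv hM.le hdiff hlip hy
    have hstep : x - t • v - x = -(t • v) := by abel
    rw [← hL, hstep, norm_neg, norm_smul, hv, mul_one, Real.norm_of_nonneg ht.1, map_neg,
      map_smul, smul_eq_mul, Real.norm_eq_abs] at htaylor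
    have := hf0 _ hy
    linarith [(abs_le.mp htaylor).2]
  have hnorm : ‖L‖ ≤ √((4 * M + 2 * ‖L‖ / r) * f x) := by
    refine L.opNorm_le_of_unit_norm (Real.sqrt_nonneg _) fun v hv => ?_
    rw [Real.norm_eq_abs, ← Real.sqrt_sq_eq_abs]
    refine Real.sqrt_le_sqrt ?_
    rcases le_total 0 (L v) with hLv | hLv
    · exact hdir v hv hLv
    · simpa using hdir (-v) (by rwa [norm_neg]) (by simpa using hLv)
  calc ‖L‖ ^ 2 ≤ √((4 * M + 2 * ‖L‖ / r) * f x) ^ 2 := by gcongr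
    _ = (4 * M + 2 * ‖L‖ / r) * f x := Real.sq_sqrt hC

theorem gradient_sq_le_of_nonneg_C2 {N : ℕ} {U : Set (EuclideanSpace ℝ (Fin N))}
    (hU : IsOpen U) (f : EuclideanSpace ℝ (Fin N) → ℝ)
    (hf : ContDiffOn ℝ 2 f U) (hf0 : ∀ x ∈ U, 0 ≤ f x)
    (K : Set (EuclideanSpace ℝ (Fin N))) (hK : IsCompact K) (hKU : K ⊆ U) :
    ∃ C > 0, ∀ x ∈ K, ‖fderiv ℝ f x‖ ^ 2 ≤ C * f x := by
  obtain ⟨δ, hδ, hKδU⟩ := hK.exists_cthickening_subset_open hU hKU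
  have hf' : ContDiffOn ℝ 1 (fderiv ℝ f) U := hf.fderiv_of_isOpen hU (by norm_num)
  obtain ⟨M, hM⟩ := (hK.cthickening (r := δ)).exists_bound_of_continuousOn
    ((hf'.continuousOn_fderiv_of_isOpen hU le_rfl).mono hKδU)
  obtain ⟨D, hD⟩ := hK.exists_bound_of_continuousOn (hf'.continuousOn.mono hKU)
  refine ⟨4 * max M 1 + 2 * max D 0 / δ, by positivity, fun x hx => ?_⟩
  have hballδ : closedBall x δ ⊆ cthickening δ K := closedBall_subset_cthickening hx δ
  have hdiff : ∀ y ∈ closedBall x δ, DifferentiableAt ℝ f y := fun y hy =>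
    (hf.differentiableOn (by norm_num)).differentiableAt (hU.mem_nhds (hKδU (hballδ hy)))
  have hlip :
      ∀ y ∈ closedBall x δ, ‖fderiv ℝ f y - fderiv ℝ f x‖ ≤ max M 1 * ‖y - x‖ :=
    fun y hy => (convex_closedBall x δ).norm_image_sub_le_of_norm_fderiv_le
      (fun z hz => (hf'.differentiableOn one_ne_zero).differentiableAt
        (hU.mem_nhds (hKδU (hballδ hz))))
      (fun z hz => (hM z (hballδ hz)).trans (le_max_left _ _))
      (mem_closedBall_self hδ.le) hy
  calc ‖fderiv ℝ f x‖ ^ 2 ≤ (4 * max M 1 + 2 * ‖fderiv ℝ f x‖ / δ) * f x :=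
        sq_norm_fderiv_le_of_nonneg_on_closedBall hδ (by positivity)
          (fun y hy => hf0 y (hKδU (hballδ hy))) hdiff hlip
    _ ≤ (4 * max M 1 + 2 * max D 0 / δ) * f x := by
        have := hf0 x (hKU hx)
        gcongr
        exact (hD x hx).trans (le_max_left _ _)
end LipschitzFDeriv
end

section
/- For every integer k ≥ 3, the function f_k(t) = t^{k−1} − (k−2)²·t + 1/((k−1)²(2k−1)²) is strictly negative for all t in the interval (1/10, 4^{−1/(2k−1)}]. -/
theorem fk_neg_on_interval (k : ℕ) (hk : 3 ≤ k) (t : ℝ)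
    (ht : t ∈ Set.Ioc (1 / 10 : ℝ) ((4 : ℝ) ^ (-(1 : ℝ) / (2 * (k : ℝ) - 1)))) :
    t ^ (k - 1) - ((k : ℝ) - 2) ^ 2 * t
      + 1 / (((k : ℝ) - 1) ^ 2 * (2 * (k : ℝ) - 1) ^ 2) < 0 := by
  obtain ⟨ht1, ht2⟩ := ht
  have hk3 : (3 : ℝ) ≤ (k : ℝ) := by exact_mod_cast hk
  have hexp : -(1 : ℝ) / (2 * (k : ℝ) - 1) < 0 := by
    apply div_neg_of_neg_of_pos <;> linarith
  have ht1' : t < 1 :=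
    lt_of_le_of_lt ht2 (Real.rpow_lt_one_of_one_lt_of_neg (by norm_num) hexp)
  have ht0 : 0 < t := lt_trans (by norm_num) ht1
  rcases eq_or_lt_of_le hk with h3 | h4
  · -- k = 3
    subst h3
    have hb : ((4 : ℝ) ^ (-(1 : ℝ) / (2 * ((3 : ℕ) : ℝ) - 1))) ≤ 9 / 10 := by
      have hx0 : (0 : ℝ) < (4 : ℝ) ^ (-(1 : ℝ) / (2 * ((3 : ℕ) : ℝ) - 1)) :=
        Real.rpow_pos_of_pos (by norm_num) _
      have h5 : ((4 : ℝ) ^ (-(1 : ℝ) / (2 * ((3 : ℕ) : ℝ) - 1))) ^ (5 : ℕ) = 1 / 4 := by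
        rw [← Real.rpow_natCast ((4 : ℝ) ^ (-(1 : ℝ) / (2 * ((3 : ℕ) : ℝ) - 1))) 5,
          ← Real.rpow_mul (by norm_num : (0:ℝ) ≤ 4)]
        norm_num
      by_contra h
      push_neg at h
      have hp : ((9 : ℝ) / 10) ^ (5 : ℕ) < ((4 : ℝ) ^ (-(1 : ℝ) / (2 * ((3 : ℕ) : ℝ) - 1))) ^ (5 : ℕ) :=
        pow_lt_pow_left₀ h (by norm_num) (by norm_num)
      rw [h5] at hp
      norm_num at hp
    have ht9 : t ≤ 9 / 10 := le_trans ht2 hb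
    norm_num
    nlinarith [mul_nonneg (by linarith : (0:ℝ) ≤ t - 1/10) (by linarith : (0:ℝ) ≤ 9/10 - t)]
  · -- k ≥ 4
    have hk4 : (4 : ℝ) ≤ (k : ℝ) := by exact_mod_cast h4
    have hpow : t ^ (k - 1) ≤ t ^ 1 :=
      pow_le_pow_of_le_one ht0.le ht1'.le (by omega)
    rw [pow_one] at hpow
    have hsq : (4 : ℝ) ≤ ((k : ℝ) - 2) ^ 2 := by nlinarith
    have hden : (100 : ℝ) ≤ ((k : ℝ) - 1) ^ 2 * (2 * (k : ℝ) - 1) ^ 2 := by nlinarith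
    have hc : 1 / (((k : ℝ) - 1) ^ 2 * (2 * (k : ℝ) - 1) ^ 2) ≤ 1 / 100 :=
      one_div_le_one_div_of_le (by norm_num) hden
    have hmul : 4 * t ≤ ((k : ℝ) - 2) ^ 2 * t :=
      mul_le_mul_of_nonneg_right hsq ht0.le
    linarith
end

section
/- Let f : U → ℝ be a smooth function on an open set U ⊂ ℝ^N attaining a local minimum at p₀, and let V : U → ℝ^N be a smooth vector field whose integral curve through p₀ exists. Then (VVf)(p₀) ≥ 0. -/
lemma aux_second_deriv_nonneg {g : ℝ → ℝ} {m : ℝ}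
    (hg : ∀ᶠ t in nhds (0:ℝ), DifferentiableAt ℝ g t)
    (h2 : HasDerivAt (deriv g) m 0) (hmin : IsLocalMin g 0) : 0 ≤ m := by
  by_contra hm
  push_neg at hm
  have hg0 : deriv g 0 = 0 := hmin.deriv_eq_zero
  have hslope : Filter.Tendsto (slope (deriv g) 0) (nhdsWithin 0 {(0:ℝ)}ᶜ) (nhds m) :=
    hasDerivAt_iff_tendsto_slope.mp h2
  have hneg : ∀ᶠ t in nhdsWithin (0:ℝ) {(0:ℝ)}ᶜ, slope (deriv g) 0 t < 0 :=
    hslope.eventually (Filter.Tendsto.eventually_lt_const hm Filter.tendsto_id)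
  -- extract ε
  obtain ⟨ε₁, hε₁, h₁⟩ := Metric.mem_nhdsWithin_iff.mp hneg
  obtain ⟨ε₂, hε₂, h₂⟩ := Metric.eventually_nhds_iff.mp (hg.and (hmin : ∀ᶠ x in nhds (0:ℝ), g 0 ≤ g x))
  set ε := min ε₁ ε₂ with hε
  have hεpos : 0 < ε := lt_min hε₁ hε₂
  have hderivneg : ∀ t ∈ Set.Ioo (0:ℝ) ε, deriv g t < 0 := by
    intro t ht
    have hdist : dist t 0 < ε₁ := by
      rw [Real.dist_eq, sub_zero, abs_of_pos ht.1]
      exact ht.2.trans_le (min_le_left _ _)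
    have h3 : slope (deriv g) 0 t < 0 := h₁ ⟨Metric.mem_ball.mpr hdist, (by simp [ne_of_gt ht.1] : t ∈ ({(0:ℝ)}ᶜ : Set ℝ))⟩
    rw [slope_def_field, hg0, sub_zero, sub_zero] at h3
    rename' h3 => this
    have := mul_neg_of_pos_of_neg ht.1 this
    rwa [mul_div_cancel₀ _ (ne_of_gt ht.1)] at this
  have hcont : ContinuousOn g (Set.Icc 0 (ε/2)) := by
    intro t ht
    have : dist t 0 < ε₂ := by
      rw [Real.dist_eq, sub_zero, abs_of_nonneg ht.1]
      exact lt_of_le_of_lt ht.2 (by linarith [min_le_right ε₁ ε₂])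
    exact ((h₂ this).1.continuousAt).continuousWithinAt
  have hanti : StrictAntiOn g (Set.Icc 0 (ε/2)) := by
    apply strictAntiOn_of_deriv_neg (convex_Icc _ _) hcont
    intro x hx
    rw [interior_Icc] at hx
    exact hderivneg x ⟨hx.1, hx.2.trans_le (by linarith)⟩
  have hlt : g (ε/2) < g 0 :=
    hanti (Set.left_mem_Icc.mpr (by linarith)) (Set.right_mem_Icc.mpr (by linarith)) (by linarith)
  have hd2 : dist (ε/2) (0:ℝ) < ε₂ := by
    rw [Real.dist_eq, sub_zero, abs_of_pos (by linarith)]; linarith [min_le_right ε₁ ε₂]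
  have hge : g 0 ≤ g (ε/2) := (h₂ hd2).2
  linarith

theorem VVf_nonneg_at_local_min {N : ℕ}
    {U : Set (EuclideanSpace ℝ (Fin N))} (hU : IsOpen U)
    {p₀ : EuclideanSpace ℝ (Fin N)} (hp₀ : p₀ ∈ U)
    (f : EuclideanSpace ℝ (Fin N) → ℝ) (hf : ContDiffOn ℝ (⊤ : ℕ∞) f U)
    (hmin : IsLocalMin f p₀)
    (V : EuclideanSpace ℝ (Fin N) → EuclideanSpace ℝ (Fin N))
    (hV : ContDiffOn ℝ (⊤ : ℕ∞) V U) :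
    0 ≤ fderiv ℝ (fun y => fderiv ℝ f y (V y)) p₀ (V p₀) := by
  set v := V p₀ with hv
  set c := fderiv ℝ f with hcdef
  have hfy : ∀ y ∈ U, ContDiffAt ℝ (⊤ : ℕ∞) f y := fun y hy => hf.contDiffAt (hU.mem_nhds hy)
  have hc : DifferentiableAt ℝ c p₀ :=
    (((hfy p₀ hp₀).fderiv_right (m := 1) ((WithTop.coe_le_coe.mpr le_top))).differentiableAt one_ne_zero)
  have hVd : DifferentiableAt ℝ V p₀ :=
    (hV.contDiffAt (hU.mem_nhds hp₀)).differentiableAt (by simp)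
  -- the curve
  set φ : ℝ → EuclideanSpace ℝ (Fin N) := fun t => p₀ + t • v with hφdef
  have hφ0 : φ 0 = p₀ := by simp [hφdef]
  have hφ : ∀ t, HasDerivAt φ v t := fun t => by
    simpa [hφdef] using ((hasDerivAt_id t).smul_const v).const_add p₀
  have hφcont : Continuous φ := by fun_prop
  set g : ℝ → ℝ := fun t => f (φ t) with hgdef
  have hUt : ∀ᶠ t in nhds (0:ℝ), φ t ∈ U := by
    have := hφcont.continuousAt (x := (0:ℝ))
    rw [ContinuousAt, hφ0] at this
    exact this (hU.mem_nhds hp₀)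
  have hgdiff : ∀ᶠ t in nhds (0:ℝ), DifferentiableAt ℝ g t := by
    filter_upwards [hUt] with t ht
    exact (((hfy _ ht).differentiableAt (by simp)).hasFDerivAt.comp_hasDerivAt t (hφ t)).differentiableAt
  have hderiv_eq : (deriv g) =ᶠ[nhds (0:ℝ)] fun t => c (φ t) v := by
    filter_upwards [hUt] with t ht
    exact (((hfy _ ht).differentiableAt (by simp)).hasFDerivAt.comp_hasDerivAt t (hφ t)).deriv
  have h2' : HasDerivAt (fun t => c (φ t) v) ((fderiv ℝ c p₀ v) v) 0 := by
    have hcc : HasFDerivAt c (fderiv ℝ c p₀) (φ 0) := by rw [hφ0]; exact hc.hasFDerivAt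
    have := hcc.comp_hasDerivAt 0 (hφ 0)
    exact this.clm_apply (hasDerivAt_const 0 v) |>.congr_deriv (by simp)
  have h2 : HasDerivAt (deriv g) ((fderiv ℝ c p₀ v) v) 0 :=
    h2'.congr_of_eventuallyEq hderiv_eq
  have hming : IsLocalMin g 0 := by
    have hm' : IsLocalMin f (φ 0) := by rw [hφ0]; exact hmin
    exact hm'.comp_continuous hφcont.continuousAt
  have key : 0 ≤ (fderiv ℝ c p₀ v) v := aux_second_deriv_nonneg hgdiff h2 hming
  have hsplit := fderiv_clm_apply (c := c) (u := V) (x := p₀) hc hVd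
  rw [hcdef] at hsplit  -- no-op
  rw [show (fun y => fderiv ℝ f y (V y)) = fun y => (c y) (V y) from rfl, hsplit]
  simp [ContinuousLinearMap.add_apply, hmin.fderiv_eq_zero, ← hcdef, ← hv]
  exact key
end

section
/- Let f : U → ℝ be a smooth function on an open set U ⊂ ℝ^N attaining a local minimum at p₀, and let V¹, ..., Vᵏ be smooth vector fields on U. Then the k×k matrix with entries M_{jl} = (VʲVˡf)(p₀) is symmetric and positive semi-definite. -/
open Filter Topology

/-- One-dimensional second derivative test: if `g` has a local min at `0`, is differentiable
near `0` with derivative `g'`, `g' 0 = 0`, and `g'` has derivative `d` at `0`, then `0 ≤ d`. -/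
lemma aux_deriv2_nonneg_of_isLocalMin {g g' : ℝ → ℝ} {d : ℝ}
    (hmin : IsLocalMin g 0)
    (hg : ∀ᶠ t in 𝓝 (0:ℝ), HasDerivAt g (g' t) t)
    (hg'0 : g' 0 = 0)
    (hg'' : HasDerivAt g' d 0) : 0 ≤ d := by
  by_contra hd
  push_neg at hd
  -- the slope of `g'` at 0 tends to `d`
  have hs : Tendsto (fun t => g' t / t) (𝓝[≠] (0:ℝ)) (𝓝 d) := by
    have h := hasDerivAt_iff_tendsto_slope.1 hg''
    have : (slope g' 0) = fun t => g' t / t := by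
      funext t
      simp [slope_def_field, hg'0]
    rwa [this] at h
  -- hence eventually on the right of 0, `g' t < 0`
  have hneg : ∀ᶠ t in 𝓝[>] (0:ℝ), g' t < 0 := by
    have h1 : ∀ᶠ t in 𝓝[>] (0:ℝ), g' t / t < d / 2 := by
      have : ∀ᶠ t in 𝓝[≠] (0:ℝ), g' t / t < d / 2 :=
        hs.eventually (eventually_lt_nhds (by linarith))
      exact this.filter_mono (nhdsWithin_mono 0 (fun t ht => ne_of_gt ht))
    filter_upwards [h1, self_mem_nhdsWithin] with t ht ht0
    have ht0' : (0:ℝ) < t := ht0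
    have := (div_lt_iff₀ ht0').1 ht
    nlinarith
  -- extract explicit radii
  obtain ⟨δ₁, hδ₁, h₁⟩ := Metric.eventually_nhds_iff.1 hg
  obtain ⟨δ₂, hδ₂, h₂⟩ := Metric.eventually_nhds_iff.1 hmin
  obtain ⟨δ₃, hδ₃, h₃⟩ := Metric.eventually_nhds_iff.1 (eventually_nhdsWithin_iff.1 hneg)
  set b : ℝ := min δ₁ (min δ₂ δ₃) / 2 with hb
  have hb0 : 0 < b := by positivity
  have hbδ₁ : b < δ₁ := by
    have : min δ₁ (min δ₂ δ₃) ≤ δ₁ := min_le_left _ _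
    simp only [hb]; linarith
  have hbδ₂ : b < δ₂ := by
    have h := (min_le_right δ₁ (min δ₂ δ₃)).trans (min_le_left δ₂ δ₃)
    simp only [hb]; linarith
  have hbδ₃ : b < δ₃ := by
    have h := (min_le_right δ₁ (min δ₂ δ₃)).trans (min_le_right δ₂ δ₃)
    simp only [hb]; linarith
  -- mean value theorem on [0, b]
  have hder : ∀ t ∈ Set.Icc (0:ℝ) b, HasDerivAt g (g' t) t := by
    intro t ht
    apply h₁
    rw [Real.dist_eq, sub_zero, abs_of_nonneg ht.1]
    exact lt_of_le_of_lt ht.2 hbδ₁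
  have hcont : ContinuousOn g (Set.Icc (0:ℝ) b) := fun t ht =>
    ((hder t ht).continuousAt).continuousWithinAt
  obtain ⟨c, hc, hceq⟩ := exists_hasDerivAt_eq_slope g g' hb0 hcont
    (fun t ht => hder t ⟨le_of_lt ht.1, le_of_lt ht.2⟩)
  -- g' c < 0
  have hc0 : g' c < 0 := by
    apply h₃ _ hc.1
    rw [Real.dist_eq, sub_zero, abs_of_pos hc.1]
    exact hc.2.trans hbδ₃
  -- but the slope is nonnegative since g has a local min at 0
  have hgb : g 0 ≤ g b := by
    apply h₂
    rw [Real.dist_eq, sub_zero, abs_of_pos hb0]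
    exact hbδ₂
  rw [hceq] at hc0
  have : (0:ℝ) ≤ (g b - g 0) / (b - 0) := by
    apply div_nonneg (by linarith) (by linarith)
  linarith

theorem secondDerivMatrix_posSemidef_at_local_min {N k : ℕ}
    {U : Set (EuclideanSpace ℝ (Fin N))} (hU : IsOpen U)
    {p₀ : EuclideanSpace ℝ (Fin N)} (hp₀ : p₀ ∈ U)
    (f : EuclideanSpace ℝ (Fin N) → ℝ) (hf : ContDiffOn ℝ (⊤ : ℕ∞) f U)
    (hmin : IsLocalMin f p₀)
    (V : Fin k → EuclideanSpace ℝ (Fin N) → EuclideanSpace ℝ (Fin N))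
    (hV : ∀ j, ContDiffOn ℝ (⊤ : ℕ∞) (V j) U)
    (M : Matrix (Fin k) (Fin k) ℝ)
    (hM : ∀ j l, M j l = fderiv ℝ (fun y => fderiv ℝ f y (V l y)) p₀ (V j p₀)) :
    M.IsSymm ∧ M.PosSemidef := by
  have hUnhds : U ∈ 𝓝 p₀ := hU.mem_nhds hp₀
  set f' : EuclideanSpace ℝ (Fin N) → EuclideanSpace ℝ (Fin N) →L[ℝ] ℝ :=
    fun y => fderiv ℝ f y with hf'def
  have hf'cd : ContDiffOn ℝ (⊤ : ℕ∞) f' U := hf.fderiv_of_isOpen hU (by simp)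
  have hdf : ∀ᶠ y in 𝓝 p₀, HasFDerivAt f (f' y) y := by
    filter_upwards [hU.eventually_mem hp₀] with y hy
    exact ((hf.contDiffAt (hU.mem_nhds hy)).differentiableAt (by simp)).hasFDerivAt
  have hdf' : HasFDerivAt f' (fderiv ℝ f' p₀) p₀ :=
    ((hf'cd.contDiffAt hUnhds).differentiableAt (by simp)).hasFDerivAt
  set f'' := fderiv ℝ f' p₀ with hf''def
  have hsymm : ∀ v w, f'' v w = f'' w v := fun v w =>
    second_derivative_symmetric_of_eventually hdf hdf' v w
  have hzero : f' p₀ = 0 := hmin.fderiv_eq_zero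
  -- The matrix entries are values of the Hessian bilinear form
  have key : ∀ j l, M j l = f'' (V j p₀) (V l p₀) := by
    intro j l
    rw [hM]
    rw [fderiv_clm_apply ((hf'cd.contDiffAt hUnhds).differentiableAt (by simp))
      (((hV l).contDiffAt hUnhds).differentiableAt (by simp))]
    simp [hzero, ← hf''def]
  -- The Hessian quadratic form is nonnegative
  have hnn : ∀ v : EuclideanSpace ℝ (Fin N), 0 ≤ f'' v v := by
    intro v
    set L : ℝ → EuclideanSpace ℝ (Fin N) := fun t => p₀ + t • v with hL
    have hL0 : L 0 = p₀ := by simp [hL]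
    have hline : ∀ t : ℝ, HasDerivAt L v t := by
      intro t
      have h := ((hasDerivAt_id t).smul_const v).const_add p₀
      simpa only [id, one_smul] using h
    set g : ℝ → ℝ := fun t => f (L t) with hg
    set g' : ℝ → ℝ := fun t => f' (L t) v with hg'
    set δ : ℝ := 1 / 2 * (1 / (‖v‖ + 1)) *
      (Classical.choose (Metric.isOpen_iff.1 hU p₀ hp₀)) with hδ
    obtain ⟨ε, hε, hball⟩ := Metric.isOpen_iff.1 hU p₀ hp₀
    set δ' : ℝ := ε / (‖v‖ + 1) with hδ'
    have hδ'0 : 0 < δ' := by positivity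
    have hmem : ∀ t : ℝ, |t| < δ' → L t ∈ U := by
      intro t ht
      apply hball
      rw [Metric.mem_ball, hL, dist_eq_norm]
      have : p₀ + t • v - p₀ = t • v := by abel
      rw [this, norm_smul, Real.norm_eq_abs]
      have h1 : |t| * ‖v‖ ≤ |t| * (‖v‖ + 1) := by
        apply mul_le_mul_of_nonneg_left (by linarith) (abs_nonneg t)
      have h2 : |t| * (‖v‖ + 1) < ε := by
        rw [hδ'] at ht
        calc |t| * (‖v‖ + 1) < ε / (‖v‖ + 1) * (‖v‖ + 1) := by
              apply mul_lt_mul_of_pos_right ht (by positivity)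
          _ = ε := by field_simp
      linarith
    have hgd : ∀ᶠ t in 𝓝 (0:ℝ), HasDerivAt g (g' t) t := by
      rw [Metric.eventually_nhds_iff]
      refine ⟨δ', hδ'0, fun t ht => ?_⟩
      rw [Real.dist_eq, sub_zero] at ht
      have hyU : L t ∈ U := hmem t ht
      have hdft : HasFDerivAt f (f' (L t)) (L t) :=
        ((hf.contDiffAt (hU.mem_nhds hyU)).differentiableAt (by simp)).hasFDerivAt
      exact hdft.comp_hasDerivAt t (hline t)
    have hg'' : HasDerivAt g' (f'' v v) 0 := by
      have h1 : HasDerivAt (fun t : ℝ => f' (L t)) (f'' v) 0 := by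
        have hd2 : HasFDerivAt f' f'' (L 0) := hL0 ▸ hdf'
        exact hd2.comp_hasDerivAt 0 (hline 0)
      have h2 := h1.clm_apply (hasDerivAt_const (0:ℝ) v)
      simpa [hL0, hzero] using h2
    have hgmin : IsLocalMin g 0 := by
      have hLc : Tendsto L (𝓝 0) (𝓝 p₀) := by
        rw [← hL0]
        exact ((continuous_const.add (continuous_id.smul continuous_const)).tendsto 0)
      have hm2 : IsMinFilter f (𝓝 p₀) (L 0) := hL0 ▸ hmin
      exact hm2.comp_tendsto hLc
    have hg'0 : g' 0 = 0 := by simp [hg', hL0, hzero]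
    exact aux_deriv2_nonneg_of_isLocalMin hgmin hgd hg'0 hg''
  constructor
  · -- symmetry
    ext i j
    simp only [Matrix.transpose_apply, key]
    exact hsymm (V j p₀) (V i p₀)
  rw [Matrix.posSemidef_iff_dotProduct_mulVec]
  constructor
  · -- Hermitian
    ext i j
    simp only [Matrix.conjTranspose_apply, key, star_trivial]
    exact hsymm (V j p₀) (V i p₀)
  · -- quadratic form nonneg
    intro x
    have expand : dotProduct (star x) (M.mulVec x) =
        f'' (∑ j, x j • V j p₀) (∑ j, x j • V j p₀) := by
      rw [map_sum]
      simp only [ContinuousLinearMap.coe_sum', Finset.sum_apply, map_sum, map_smul,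
        ContinuousLinearMap.coe_smul', Pi.smul_apply, smul_eq_mul,
        dotProduct, Matrix.mulVec, star_trivial, key]
      refine Finset.sum_congr rfl fun j _ => ?_
      congr 1
      refine Finset.sum_congr rfl fun l _ => ?_
      rw [hsymm (V j p₀) (V l p₀), mul_comm]
    show 0 ≤ dotProduct (star x) (M.mulVec x)
    rw [expand]
    exact hnn _
end

section
/- Let r(z,w) = Re(w) + (1/k²)|z|^{2k} − (2/(k−1)²)|z|^{2k−2}·Im(w) + (1/(k−2)²)|z|^{2k−4}·Im(w)² + |z|^{4k−2} for an integer k ≥ 3. Then the complex partial derivative r_{z z̄}(z,w) equals |z|^{2k−6}·(|z|² − Im(w))² + (2k−1)²·|z|^{4k−4}, and in particular r_{z z̄} ≥ 0 everywhere. -/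
/-- The defining function of the counterexample domain (without the `|w|²` term). -/
noncomputable def counterexampleDefFn (k : ℕ) (z w : ℂ) : ℝ :=
  w.re + (1 / (k : ℝ) ^ 2) * ‖z‖ ^ (2 * k)
    - (2 / ((k : ℝ) - 1) ^ 2) * ‖z‖ ^ (2 * k - 2) * w.im
    + (1 / ((k : ℝ) - 2) ^ 2) * ‖z‖ ^ (2 * k - 4) * w.im ^ 2
    + ‖z‖ ^ (4 * k - 2)

private lemma h2t (t : ℝ) : HasDerivAt (fun t : ℝ => 2 * t) 2 t := by
  simpa using (hasDerivAt_id t).const_mul (2 : ℝ)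

private lemma d1 (n : ℕ) (c t : ℝ) :
    HasDerivAt (fun t : ℝ => (t ^ 2 + c) ^ n) ((n : ℝ) * (t ^ 2 + c) ^ (n - 1) * (2 * t)) t := by
  have h := ((hasDerivAt_pow 2 t).add_const c).fun_pow n
  simpa using h

private lemma dterm (n : ℕ) (c t : ℝ) :
    HasDerivAt (fun t : ℝ => (t ^ 2 + c) ^ n * (2 * t))
      ((n : ℝ) * (t ^ 2 + c) ^ (n - 1) * (2 * t) * (2 * t) + (t ^ 2 + c) ^ n * 2) t :=
  (d1 n c t).mul (h2t t)

private lemma secondDeriv_aux (m : ℕ) (q p c t : ℝ) :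
    deriv (fun s : ℝ => deriv (fun u : ℝ =>
        q + (1 / ((m : ℝ) + 3) ^ 2) * (u ^ 2 + c) ^ (m + 3)
          - (2 / ((m : ℝ) + 2) ^ 2) * (u ^ 2 + c) ^ (m + 2) * p
          + (1 / ((m : ℝ) + 1) ^ 2) * (u ^ 2 + c) ^ (m + 1) * p ^ 2
          + (u ^ 2 + c) ^ (2 * m + 5)) s) t
      = (1 / ((m : ℝ) + 3) ^ 2) * (((m : ℝ) + 3) *
            (((m : ℝ) + 2) * (t ^ 2 + c) ^ (m + 1) * (2 * t) * (2 * t) + (t ^ 2 + c) ^ (m + 2) * 2))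
        - (2 / ((m : ℝ) + 2) ^ 2) * p * (((m : ℝ) + 2) *
            (((m : ℝ) + 1) * (t ^ 2 + c) ^ m * (2 * t) * (2 * t) + (t ^ 2 + c) ^ (m + 1) * 2))
        + (1 / ((m : ℝ) + 1) ^ 2) * p ^ 2 * (((m : ℝ) + 1) *
            ((m : ℝ) * (t ^ 2 + c) ^ (m - 1) * (2 * t) * (2 * t) + (t ^ 2 + c) ^ m * 2))
        + (2 * (m : ℝ) + 5) *
            ((2 * (m : ℝ) + 4) * (t ^ 2 + c) ^ (2 * m + 3) * (2 * t) * (2 * t)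
              + (t ^ 2 + c) ^ (2 * m + 4) * 2) := by
  have hd : ∀ s : ℝ, HasDerivAt (fun u : ℝ =>
      q + (1 / ((m : ℝ) + 3) ^ 2) * (u ^ 2 + c) ^ (m + 3)
        - (2 / ((m : ℝ) + 2) ^ 2) * (u ^ 2 + c) ^ (m + 2) * p
        + (1 / ((m : ℝ) + 1) ^ 2) * (u ^ 2 + c) ^ (m + 1) * p ^ 2
        + (u ^ 2 + c) ^ (2 * m + 5))
      ((1 / ((m : ℝ) + 3) ^ 2 * (((m : ℝ) + 3))) * ((s ^ 2 + c) ^ (m + 2) * (2 * s))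
        + (-(2 / ((m : ℝ) + 2) ^ 2 * p * ((m : ℝ) + 2))) * ((s ^ 2 + c) ^ (m + 1) * (2 * s))
        + (1 / ((m : ℝ) + 1) ^ 2 * p ^ 2 * ((m : ℝ) + 1)) * ((s ^ 2 + c) ^ m * (2 * s))
        + (2 * (m : ℝ) + 5) * ((s ^ 2 + c) ^ (2 * m + 4) * (2 * s))) s := by
    intro s
    have h1 := (d1 (m + 3) c s).const_mul (1 / ((m : ℝ) + 3) ^ 2)
    have h2 := ((d1 (m + 2) c s).const_mul (2 / ((m : ℝ) + 2) ^ 2)).mul_const p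
    have h3 := ((d1 (m + 1) c s).const_mul (1 / ((m : ℝ) + 1) ^ 2)).mul_const (p ^ 2)
    have h4 := d1 (2 * m + 5) c s
    have h := (((h1.const_add q).fun_sub h2).fun_add h3).fun_add h4
    refine h.congr_deriv ?_
    rw [show m + 3 - 1 = m + 2 by omega, show m + 2 - 1 = m + 1 by omega,
      show m + 1 - 1 = m by omega, show 2 * m + 5 - 1 = 2 * m + 4 by omega]
    push_cast
    ring
  have hdf : (fun s : ℝ => deriv (fun u : ℝ =>
      q + (1 / ((m : ℝ) + 3) ^ 2) * (u ^ 2 + c) ^ (m + 3)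
        - (2 / ((m : ℝ) + 2) ^ 2) * (u ^ 2 + c) ^ (m + 2) * p
        + (1 / ((m : ℝ) + 1) ^ 2) * (u ^ 2 + c) ^ (m + 1) * p ^ 2
        + (u ^ 2 + c) ^ (2 * m + 5)) s)
      = fun s : ℝ =>
        (1 / ((m : ℝ) + 3) ^ 2 * (((m : ℝ) + 3))) * ((s ^ 2 + c) ^ (m + 2) * (2 * s))
        + (-(2 / ((m : ℝ) + 2) ^ 2 * p * ((m : ℝ) + 2))) * ((s ^ 2 + c) ^ (m + 1) * (2 * s))
        + (1 / ((m : ℝ) + 1) ^ 2 * p ^ 2 * ((m : ℝ) + 1)) * ((s ^ 2 + c) ^ m * (2 * s))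
        + (2 * (m : ℝ) + 5) * ((s ^ 2 + c) ^ (2 * m + 4) * (2 * s)) :=
    funext fun s => (hd s).deriv
  rw [hdf]
  have h1 := (dterm (m + 2) c t).const_mul (1 / ((m : ℝ) + 3) ^ 2 * (((m : ℝ) + 3)))
  have h2 := (dterm (m + 1) c t).const_mul (-(2 / ((m : ℝ) + 2) ^ 2 * p * ((m : ℝ) + 2)))
  have h3 := (dterm m c t).const_mul (1 / ((m : ℝ) + 1) ^ 2 * p ^ 2 * ((m : ℝ) + 1))
  have h4 := (dterm (2 * m + 4) c t).const_mul (2 * (m : ℝ) + 5)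
  have h := ((h1.fun_add h2).fun_add h3).fun_add h4
  rw [h.deriv]
  rw [show m + 2 - 1 = m + 1 by omega, show m + 1 - 1 = m by omega,
    show 2 * m + 4 - 1 = 2 * m + 3 by omega]
  push_cast
  ring

/-- `r_{z z̄} = (1/4)(∂²/∂x² + ∂²/∂y²) r` equals
`|z|^{2k-6}(|z|² − Im w)² + (2k−1)²|z|^{4k−4}`, and in particular is nonnegative. -/
theorem counterexample_r_zzbar (k : ℕ) (hk : 3 ≤ k) (z w : ℂ) :
    (1 / 4 : ℝ) *
        (deriv (fun x : ℝ => deriv (fun x' : ℝ =>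
            counterexampleDefFn k (x' + z.im * Complex.I) w) x) z.re
          + deriv (fun y : ℝ => deriv (fun y' : ℝ =>
            counterexampleDefFn k (z.re + y' * Complex.I) w) y) z.im)
      = ‖z‖ ^ (2 * k - 6) * (‖z‖ ^ 2 - w.im) ^ 2
          + (2 * (k : ℝ) - 1) ^ 2 * ‖z‖ ^ (4 * k - 4) ∧
    0 ≤ ‖z‖ ^ (2 * k - 6) * (‖z‖ ^ 2 - w.im) ^ 2
          + (2 * (k : ℝ) - 1) ^ 2 * ‖z‖ ^ (4 * k - 4) := by
  obtain ⟨m, rfl⟩ : ∃ m, k = m + 3 := ⟨k - 3, by omega⟩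
  refine ⟨?_, by positivity⟩
  have habs : ∀ (x y : ℝ) (n : ℕ),
      ‖(↑x + ↑y * Complex.I : ℂ)‖ ^ (2 * n) = (x ^ 2 + y ^ 2) ^ n := by
    intro x y n
    rw [pow_mul, Complex.sq_norm]
    congr 1
    simp [Complex.normSq_apply]
    ring
  have hfnx : ∀ x y : ℝ, counterexampleDefFn (m + 3) (↑x + ↑y * Complex.I) w
      = w.re + (1 / ((m : ℝ) + 3) ^ 2) * (x ^ 2 + y ^ 2) ^ (m + 3)
        - (2 / ((m : ℝ) + 2) ^ 2) * (x ^ 2 + y ^ 2) ^ (m + 2) * w.im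
        + (1 / ((m : ℝ) + 1) ^ 2) * (x ^ 2 + y ^ 2) ^ (m + 1) * w.im ^ 2
        + (x ^ 2 + y ^ 2) ^ (2 * m + 5) := by
    intro x y
    unfold counterexampleDefFn
    rw [show 2 * (m + 3) - 2 = 2 * (m + 2) by omega, show 2 * (m + 3) - 4 = 2 * (m + 1) by omega,
      show 4 * (m + 3) - 2 = 2 * (2 * m + 5) by omega, habs, habs, habs, habs]
    push_cast
    ring
  have hfny : ∀ x y : ℝ, counterexampleDefFn (m + 3) (↑x + ↑y * Complex.I) w
      = w.re + (1 / ((m : ℝ) + 3) ^ 2) * (y ^ 2 + x ^ 2) ^ (m + 3)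
        - (2 / ((m : ℝ) + 2) ^ 2) * (y ^ 2 + x ^ 2) ^ (m + 2) * w.im
        + (1 / ((m : ℝ) + 1) ^ 2) * (y ^ 2 + x ^ 2) ^ (m + 1) * w.im ^ 2
        + (y ^ 2 + x ^ 2) ^ (2 * m + 5) := by
    intro x y
    rw [hfnx x y, add_comm (y ^ 2) (x ^ 2)]
  have Ex : (fun x' : ℝ => counterexampleDefFn (m + 3) (↑x' + ↑z.im * Complex.I) w)
      = fun u : ℝ => w.re + (1 / ((m : ℝ) + 3) ^ 2) * (u ^ 2 + z.im ^ 2) ^ (m + 3)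
        - (2 / ((m : ℝ) + 2) ^ 2) * (u ^ 2 + z.im ^ 2) ^ (m + 2) * w.im
        + (1 / ((m : ℝ) + 1) ^ 2) * (u ^ 2 + z.im ^ 2) ^ (m + 1) * w.im ^ 2
        + (u ^ 2 + z.im ^ 2) ^ (2 * m + 5) := funext fun u => hfnx u z.im
  have Ey : (fun y' : ℝ => counterexampleDefFn (m + 3) (↑z.re + ↑y' * Complex.I) w)
      = fun u : ℝ => w.re + (1 / ((m : ℝ) + 3) ^ 2) * (u ^ 2 + z.re ^ 2) ^ (m + 3)
        - (2 / ((m : ℝ) + 2) ^ 2) * (u ^ 2 + z.re ^ 2) ^ (m + 2) * w.im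
        + (1 / ((m : ℝ) + 1) ^ 2) * (u ^ 2 + z.re ^ 2) ^ (m + 1) * w.im ^ 2
        + (u ^ 2 + z.re ^ 2) ^ (2 * m + 5) := funext fun u => hfny z.re u
  rw [Ex, Ey, secondDeriv_aux m w.re w.im (z.im ^ 2) z.re,
    secondDeriv_aux m w.re w.im (z.re ^ 2) z.im]
  rw [show 2 * (m + 3) - 6 = 2 * m by omega, show 4 * (m + 3) - 4 = 2 * (2 * m + 4) by omega]
  have habsz : ∀ n : ℕ, ‖z‖ ^ (2 * n) = (z.re ^ 2 + z.im ^ 2) ^ n := by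
    intro n
    rw [pow_mul, Complex.sq_norm, Complex.normSq_apply]
    ring_nf
  have habsz2 : ‖z‖ ^ 2 = z.re ^ 2 + z.im ^ 2 := by
    rw [Complex.sq_norm, Complex.normSq_apply]; ring
  rw [habsz m, habsz (2 * m + 4), habsz2]
  push_cast
  rcases m with _ | m'
  · norm_num
    ring
  · rw [show m' + 1 - 1 = m' by omega]
    have h1 : ((m' : ℝ) + 1 + 3) ≠ 0 := by positivity
    have h2 : ((m' : ℝ) + 1 + 2) ≠ 0 := by positivity
    have h3 : ((m' : ℝ) + 1 + 1) ≠ 0 := by positivity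
    push_cast
    field_simp
    ring
end
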